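/- arXiv:1912.12992 — 4 statements merged into one kernel-verified Lean document; each statement's English description precedes it below -/
import Mathlib

section
/- Let \(n_0\) be a positive integer, \(n_i = 3n_{i-1} + d_i\) with \(d_i \in \{1,2,3\}\), and let C > 0. Suppose a sequence of non-negative reals \(T_i\) satisfies \(T_0 \le \tfrac{4}{9} n_0^2 + C n_0\) and \(T_{i+1} \le 2 T_i + \tfrac{1}{3} n_{i+1}^2 + C n_{i+1}\) for all \(i \ge 0\). Then there exists a constant C' > 0 such that for all \(i \ge 0\), \(T_i \le \Big(\tfrac{3}{7} + \tfrac{1}{63}\big(\tfrac{2}{9}\big)^{i}\Big) n_i^2 + C' n_i\). -/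
/-!
The coefficients `a i = 3/7 + (1/63) (2/9)^i` are the solution of `a (i+1) = (2/9) a i + 1/3`
with `a 0 = 4/9`. Since `n (i+1) ≥ 3 n i`, doubling the bound `a i n_i² + K n_i` gives at most
`(2/9) a i n_{i+1}² + (2/3) K n_{i+1}`, so adding `n_{i+1}²/3 + C n_{i+1}` reproduces the bound
at `i + 1` as soon as `K ≥ 3C`.
-/

noncomputable def brushCoeff (i : ℕ) : ℝ := 3 / 7 + 1 / 63 * (2 / 9) ^ i

lemma brushCoeff_nonneg (i : ℕ) : 0 ≤ brushCoeff i := by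
  unfold brushCoeff; positivity

lemma brushCoeff_zero : brushCoeff 0 = 4 / 9 := by
  norm_num [brushCoeff]

lemma brushCoeff_succ (i : ℕ) : brushCoeff (i + 1) = 2 / 9 * brushCoeff i + 1 / 3 := by
  simp only [brushCoeff, pow_succ]; ring

lemma le_quadratic_linear_succ {a C K m m' t t' : ℝ} (ha : 0 ≤ a) (hK : 0 ≤ K)
    (hCK : 3 * C ≤ K) (hm : 0 ≤ m) (hgrow : 3 * m ≤ m')
    (ht : t ≤ a * m ^ 2 + K * m) (ht' : t' ≤ 2 * t + 1 / 3 * m' ^ 2 + C * m') :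
    t' ≤ (2 / 9 * a + 1 / 3) * m' ^ 2 + K * m' := by
  have hm' : 0 ≤ m' := by linarith
  have hsq : (3 * m) ^ 2 ≤ m' ^ 2 := pow_le_pow_left₀ (by linarith) hgrow 2
  have hquad : 2 * (a * m ^ 2) ≤ 2 / 9 * a * m' ^ 2 := by nlinarith
  have hlin : 2 * (K * m) ≤ 2 / 3 * K * m' := by nlinarith
  have hC : C * m' ≤ K / 3 * m' := mul_le_mul_of_nonneg_right (by linarith) hm'
  linarith

theorem le_quadratic_linear_of_le_two_mul_add (a n T : ℕ → ℝ) {C K : ℝ}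
    (ha : ∀ i, 0 ≤ a i) (ha_succ : ∀ i, a (i + 1) = 2 / 9 * a i + 1 / 3)
    (hn : ∀ i, 0 ≤ n i) (hgrow : ∀ i, 3 * n i ≤ n (i + 1)) (hK : 0 ≤ K) (hCK : 3 * C ≤ K)
    (hT0 : T 0 ≤ a 0 * n 0 ^ 2 + C * n 0)
    (hTrec : ∀ i, T (i + 1) ≤ 2 * T i + 1 / 3 * n (i + 1) ^ 2 + C * n (i + 1)) (i : ℕ) :
    T i ≤ a i * n i ^ 2 + K * n i := by
  induction i with
  | zero =>
    have hC : C * n 0 ≤ K * n 0 := mul_le_mul_of_nonneg_right (by linarith) (hn 0)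
    linarith
  | succ i ih =>
    rw [ha_succ]
    exact le_quadratic_linear_succ (ha i) hK hCK (hn i) (hgrow i) ih (hTrec i)

theorem stmt_8_general (n d : ℕ → ℕ)
    (hrec : ∀ i, n (i + 1) = 3 * n (i) + d (i + 1))
    (C : ℝ) (T : ℕ → ℝ)
    (hT0 : T 0 ≤ 4 / 9 * (n 0 : ℝ) ^ 2 + C * n 0)
    (hTrec : ∀ i, T (i + 1) ≤ 2 * T i + 1 / 3 * (n (i + 1) : ℝ) ^ 2 + C * n (i + 1)) :
    ∃ C' : ℝ, 0 < C' ∧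
      ∀ i, T i ≤ (3 / 7 + 1 / 63 * (2 / 9) ^ i) * (n i : ℝ) ^ 2 + C' * n i := by
  have hgrow (i : ℕ) : 3 * (n i : ℝ) ≤ n (i + 1) := by
    rw [hrec i]; push_cast; linarith [(d (i + 1)).cast_nonneg (α := ℝ)]
  refine ⟨max (3 * C) 1, by positivity, fun i => ?_⟩
  exact le_quadratic_linear_of_le_two_mul_add brushCoeff (fun i => n i) T brushCoeff_nonneg
    brushCoeff_succ (fun i => (n i).cast_nonneg) hgrow (by positivity) (le_max_left _ _)
    (by rwa [brushCoeff_zero]) hTrec i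

theorem stmt_8 (n d : ℕ → ℕ) (h0 : 1 ≤ n 0)
    (hd : ∀ i, d (i + 1) ∈ ({1, 2, 3} : Set ℕ))
    (hrec : ∀ i, n (i + 1) = 3 * n (i) + d (i + 1))
    (C : ℝ) (hC : 0 < C) (T : ℕ → ℝ) (hT : ∀ i, 0 ≤ T i)
    (hT0 : T 0 ≤ 4 / 9 * (n 0 : ℝ) ^ 2 + C * n 0)
    (hTrec : ∀ i, T (i + 1) ≤ 2 * T i + 1 / 3 * (n (i + 1) : ℝ) ^ 2 + C * n (i + 1)) :
    ∃ C' : ℝ, 0 < C' ∧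
      ∀ i, T i ≤ (3 / 7 + 1 / 63 * (2 / 9) ^ i) * (n i : ℝ) ^ 2 + C' * n i :=
  stmt_8_general n d hrec C T hT0 hTrec
end

section
/- Let \(n_0\) be a positive integer and \(n_i = 3n_{i-1} + d_i\) with \(d_i \in \{1,2,3\}\). Suppose \(b_i = \lfloor n_i^2/4 \rfloor\) and \(c_i\) is a sequence of positive reals satisfying \(\tfrac{5}{16} n_i^2 \le c_i \le \big(\tfrac{3}{7} + \tfrac{1}{63}(\tfrac{2}{9})^{i}\big) n_i^2 + C n_i\) for some constant C. Then \(\liminf_{i \to \infty} b_i / c_i \ge \tfrac{7}{12}\). -/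
/-!
Since `b_i ≥ (n_i² - 3)/4`, the ratio `b_i / c_i` is eventually at least
`((n_i² - 3)/4) / ((3/7 + (2/9)^i/63) n_i² + C n_i)`, and as `n_i → ∞` this tends to
`(1/4)/(3/7) = 7/12`. The lower bound `c_i ≥ 5/16 n_i²` keeps `b_i / c_i ≤ 4/5`, so that its
`liminf` is not a junk value.
-/

open Filter Topology

theorem Nat.cast_add_one_sub_div_le_cast_div {α : Type*} [Field α] [LinearOrder α]
    [IsStrictOrderedRing α] (m k : ℕ) (hk : 0 < k) :
    ((m : α) + 1 - k) / k ≤ ((m / k : ℕ) : α) := by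
  have hlt : m + 1 ≤ k * (m / k) + k := by
    have := Nat.div_add_mod m k
    have := Nat.mod_lt m hk
    omega
  have hltR : (m : α) + 1 ≤ k * ((m / k : ℕ) : α) + k := by exact_mod_cast hlt
  rw [div_le_iff₀ (by exact_mod_cast hk)]
  linarith

theorem tendsto_quadratic_div_quadratic {ι : Type*} {l : Filter ι} {x e : ι → ℝ}
    (hx : Tendsto x l atTop) (he : Tendsto e l (𝓝 0)) (a q α C : ℝ) (hα : α ≠ 0) :
    Tendsto (fun i => (a * x i ^ 2 + q) / ((α + e i) * x i ^ 2 + C * x i)) l (𝓝 (a / α)) := by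
  have hinv : Tendsto (fun i => (x i)⁻¹) l (𝓝 0) := hx.inv_tendsto_atTop
  have hlim : Tendsto (fun i => (a + q * (x i)⁻¹ ^ 2) / (α + e i + C * (x i)⁻¹)) l
      (𝓝 (a / α)) := by
    have hnum := (hinv.pow 2).const_mul q |>.const_add a
    have hden := (he.const_add α).add (hinv.const_mul C)
    simp only [ne_eq, OfNat.ofNat_ne_zero, not_false_eq_true, zero_pow, mul_zero, add_zero]
      at hnum hden
    exact hnum.div hden hα
  refine hlim.congr' ?_
  filter_upwards [hx.eventually_gt_atTop 0] with i hi
  field_simp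

theorem tendsto_natCast_atTop_of_lt_succ {n : ℕ → ℕ} (h : ∀ i, n i < n (i + 1)) :
    Tendsto (fun i => (n i : ℝ)) atTop atTop :=
  tendsto_natCast_atTop_atTop.comp (strictMono_nat_of_lt_succ h).tendsto_atTop

theorem Filter.le_liminf_of_tendsto_of_eventually_le {ι : Type*} {l : Filter ι} [l.NeBot]
    {u g : ι → ℝ} {L M : ℝ} (hg : Tendsto g l (𝓝 L)) (hgu : ∀ᶠ i in l, g i ≤ u i)
    (huM : ∀ᶠ i in l, u i ≤ M) : L ≤ liminf u l :=
  hg.liminf_eq ▸ liminf_le_liminf hgu hg.isBoundedUnder_ge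
    (isCoboundedUnder_ge_of_eventually_le l huM)

theorem stmt_9_general (n d : ℕ → ℕ)
    (hd : ∀ i, d (i + 1) ∈ ({1, 2, 3} : Set ℕ))
    (hrec : ∀ i, n (i + 1) = 3 * n (i) + d (i + 1))
    (b : ℕ → ℕ) (hb : ∀ i, b i = n i ^ 2 / 4)
    (c : ℕ → ℝ) (C : ℝ)
    (hlb : ∀ i, 5 / 16 * (n i : ℝ) ^ 2 ≤ c i)
    (hub : ∀ i, c i ≤ (3 / 7 + 1 / 63 * (2 / 9) ^ i) * (n i : ℝ) ^ 2 + C * n i) :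
    7 / 12 ≤ Filter.liminf (fun i => (b i : ℝ) / c i) Filter.atTop := by
  have hn : Tendsto (fun i => (n i : ℝ)) atTop atTop := by
    refine tendsto_natCast_atTop_of_lt_succ fun i => ?_
    have hd1 : 1 ≤ d (i + 1) := by rcases hd i with h | h | h <;> rw [h] <;> norm_num
    rw [hrec]; omega
  have he : Tendsto (fun i => 1 / 63 * ((2 : ℝ) / 9) ^ i) atTop (𝓝 0) := by
    simpa only [mul_zero] using (tendsto_pow_atTop_nhds_zero_of_lt_one (r := (2 : ℝ) / 9)
      (by norm_num) (by norm_num)).const_mul (1 / 63)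
  have hlim := tendsto_quadratic_div_quadratic hn he (1 / 4) (-3 / 4) (3 / 7) C (by norm_num)
  have hc : ∀ᶠ i in atTop, 0 < c i := by
    filter_upwards [hn.eventually_gt_atTop 0] with i hi
    exact (by positivity : (0 : ℝ) < 5 / 16 * (n i : ℝ) ^ 2).trans_le (hlb i)
  rw [show (7 / 12 : ℝ) = 1 / 4 / (3 / 7) by norm_num]
  refine le_liminf_of_tendsto_of_eventually_le (M := 4 / 5) hlim ?_ ?_ <;>
    filter_upwards [hc] with i hci
  · have hb_ge : 1 / 4 * (n i : ℝ) ^ 2 + -3 / 4 ≤ b i := by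
      have := Nat.cast_add_one_sub_div_le_cast_div (α := ℝ) (n i ^ 2) 4 (by norm_num)
      rw [hb]; push_cast at this; linarith
    exact div_le_div₀ (Nat.cast_nonneg _) hb_ge hci (hub i)
  · have hb_le : (b i : ℝ) ≤ (n i : ℝ) ^ 2 / 4 := by
      have := Nat.cast_div_le (α := ℝ) (m := n i ^ 2) (n := 4)
      rw [hb]; push_cast at this; exact this
    exact div_le_of_le_mul₀ hci.le (by norm_num) (by linarith [hlb i])

theorem stmt_9 (n d : ℕ → ℕ) (h0 : 1 ≤ n 0)
    (hd : ∀ i, d (i + 1) ∈ ({1, 2, 3} : Set ℕ))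
    (hrec : ∀ i, n (i + 1) = 3 * n (i) + d (i + 1))
    (b : ℕ → ℕ) (hb : ∀ i, b i = n i ^ 2 / 4)
    (c : ℕ → ℝ) (hc : ∀ i, 0 < c i) (C : ℝ)
    (hlb : ∀ i, 5 / 16 * (n i : ℝ) ^ 2 ≤ c i)
    (hub : ∀ i, c i ≤ (3 / 7 + 1 / 63 * (2 / 9) ^ i) * (n i : ℝ) ^ 2 + C * n i) :
    7 / 12 ≤ Filter.liminf (fun i => (b i : ℝ) / c i) Filter.atTop :=
  stmt_9_general n d hd hrec b hb c C hlb hub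
end

section
/- With the clique parallel cleaning model and the initial configuration \(\omega_0(v_i) = k+2\) for \(k \le i \le 2k+2\) and \(\omega_0(v_i) = i\) otherwise on K_{3k+3} (k a non-negative integer), the final configuration of brushes, as a multiset of values over the vertices, equals the initial multiset \(\{0,1,\dots,k-1\} \cup \{k+2 \text{ (with multiplicity } k+3)\} \cup \{2k+3,\dots,3k+2\}\); moreover at every step every vertex holds at most \(3k+2\) brushes. -/
/-- One step of the parallel cleaning process on the clique `K n`:
all dirty vertices with at least `|D| - 1` brushes are cleaned simultaneously. -/
def cleanStep (n : ℕ) (s : (Fin n → ℕ) × Finset (Fin n)) : (Fin n → ℕ) × Finset (Fin n) :=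
  let P := s.2.filter (fun v => s.2.card - 1 ≤ s.1 v)
  (fun v =>
    if v ∈ P then s.1 v - (s.2.card - 1) + (P.card - 1)
    else if v ∈ s.2 then s.1 v + P.card
    else s.1 v,
   s.2 \ P)

/-- The state (brush configuration, set of dirty vertices) of the parallel cleaning
process on `K n` after `t` steps, starting from configuration `ω0` with all vertices dirty. -/
def cleanState (n : ℕ) (ω0 : Fin n → ℕ) : ℕ → (Fin n → ℕ) × Finset (Fin n)
  | 0 => (ω0, Finset.univ)
  | t + 1 => cleanStep n (cleanState n ω0 t)

/-
Index the vertices 0, …, 3k+2. Throughout the run the dirty vertices form an initial segment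
{v < d}, so the whole run has a closed form. While c < k of the high vertices (index ≥ 2k+3)
are clean, a dirty vertex j holds ω₀(j) + c brushes against the threshold 3k+2-c, so exactly the
high vertices j ≥ 3k+2-2c are cleaned and c becomes min(2c+1, k). The batch cleaned in such a
round receives exactly the values c, …, c'-1; hence the high vertices end with {0, …, k-1}.
Once c = k the k+3 middle vertices (holding 2k+2 each) are cleaned together and end with k+2,
and in the last round the low vertices j < k, now holding j+2k+3, are cleaned and keep that.
-/

open Finset

namespace CliqueCleaning

-- Brush counts are stored on `ℕ`, so that the closed forms below need no `Fin` arithmetic.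
def prefixState (n : ℕ) (ω : ℕ → ℕ) (d : ℕ) : (Fin n → ℕ) × Finset (Fin n) :=
  (fun v => ω v, univ.filter fun v => (v : ℕ) < d)

lemma card_filter_val_mem_Ico {n a d : ℕ} (had : a ≤ d) (hdn : d ≤ n) :
    #(univ.filter fun v : Fin n => a ≤ (v : ℕ) ∧ (v : ℕ) < d) = d - a := by
  have hsdiff : (univ.filter fun v : Fin n => a ≤ (v : ℕ) ∧ (v : ℕ) < d) =
      (univ.filter fun v : Fin n => (v : ℕ) < d) \
        univ.filter fun v : Fin n => (v : ℕ) < a := by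
    ext v; simp only [mem_sdiff, mem_filter, mem_univ, true_and]; omega
  rw [hsdiff, card_sdiff_of_subset (fun v => by simp only [mem_filter, mem_univ, true_and]; omega),
    Fin.card_filter_val_lt, Fin.card_filter_val_lt]
  omega

lemma cleanStep_prefixState {n a d : ℕ} {ω ω' : ℕ → ℕ} (had : a ≤ d) (hdn : d ≤ n)
    (hclean : ∀ v < d, d - 1 ≤ ω v ↔ a ≤ v)
    (hdirty : ∀ v < a, ω' v = ω v + (d - a))
    (hcleaned : ∀ v, a ≤ v → v < d → ω' v = ω v - (d - 1) + (d - a - 1))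
    (hidle : ∀ v, d ≤ v → v < n → ω' v = ω v) :
    cleanStep n (prefixState n ω d) = prefixState n ω' a := by
  have hcard : #(univ.filter fun v : Fin n => (v : ℕ) < d) = d := by
    rw [Fin.card_filter_val_lt]; omega
  have hP : ((univ.filter fun v : Fin n => (v : ℕ) < d).filter fun v : Fin n => d - 1 ≤ ω v) =
      univ.filter fun v : Fin n => a ≤ (v : ℕ) ∧ (v : ℕ) < d := by
    ext v
    simp only [mem_filter, mem_univ, true_and]
    have := hclean v
    tauto
  simp only [cleanStep, prefixState, hcard, hP, card_filter_val_mem_Ico had hdn]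
  refine Prod.ext (funext fun v => ?_) (Finset.ext fun v => ?_)
  · simp only [mem_filter, mem_univ, true_and]
    split_ifs with hPv hDv
    · exact (hcleaned v hPv.1 hPv.2).symm
    · exact (hdirty v (by omega)).symm
    · exact (hidle v (by omega) v.isLt).symm
  · simp only [mem_sdiff, mem_filter, mem_univ, true_and]
    omega

lemma cleanStep_prefixState_zero (n : ℕ) (ω : ℕ → ℕ) :
    cleanStep n (prefixState n ω 0) = prefixState n ω 0 :=
  cleanStep_prefixState le_rfl (Nat.zero_le n) (by simp) (by simp) (by omega) (by simp)

lemma map_univ_val_fin (n : ℕ) (f : ℕ → ℕ) :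
    Multiset.map (fun v : Fin n => f v) univ.val = Multiset.map f (Multiset.range n) := by
  rw [← Multiset.coe_range, Multiset.map_coe, ← List.map_coe_finRange_eq_range, List.map_map,
    Fin.univ_val_map, List.ofFn_eq_map]
  rfl

variable {k : ℕ}

def initialBrushes (k j : ℕ) : ℕ := if k ≤ j ∧ j ≤ 2 * k + 2 then k + 2 else j

def numCleanedHigh (k t : ℕ) : ℕ := min (2 ^ t - 1) k

lemma numCleanedHigh_zero : numCleanedHigh k 0 = 0 := by simp [numCleanedHigh]

lemma numCleanedHigh_le (t : ℕ) : numCleanedHigh k t ≤ k := min_le_right _ _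

lemma numCleanedHigh_lt {t : ℕ} (ht : t < Nat.size k) : numCleanedHigh k t < k := by
  have := Nat.lt_size.mp ht
  have : 1 ≤ 2 ^ t := Nat.one_le_two_pow
  unfold numCleanedHigh; omega

lemma numCleanedHigh_succ {t : ℕ} (ht : t < Nat.size k) :
    numCleanedHigh k (t + 1) = min (2 * numCleanedHigh k t + 1) k := by
  have := Nat.lt_size.mp ht
  have : 1 ≤ 2 ^ t := Nat.one_le_two_pow
  unfold numCleanedHigh; rw [pow_succ]; omega

lemma numCleanedHigh_size : numCleanedHigh k (Nat.size k) = k := by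
  have := Nat.lt_size_self k
  unfold numCleanedHigh; omega

-- the round, counted from 1, in which the high vertex `j` is cleaned
def cleaningRound (k j : ℕ) : ℕ := Nat.clog 2 (3 * k + 4 - j)

lemma cleaningRound_eq {t j : ℕ} (ht : t < Nat.size k)
    (hlo : 3 * k + 3 - numCleanedHigh k (t + 1) ≤ j) (hhi : j < 3 * k + 3 - numCleanedHigh k t) :
    cleaningRound k j = t + 1 := by
  have hc : numCleanedHigh k t = 2 ^ t - 1 := by
    have := Nat.lt_size.mp ht; unfold numCleanedHigh; omega
  have hc' : numCleanedHigh k (t + 1) ≤ 2 ^ (t + 1) - 1 := min_le_left _ _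
  have : 1 ≤ 2 ^ t := Nat.one_le_two_pow
  rw [pow_succ] at hc'
  refine le_antisymm ((Nat.clog_le_iff_le_pow one_lt_two).mpr ?_)
    ((Nat.lt_clog_iff_pow_lt one_lt_two).mpr ?_)
  · rw [pow_succ]; omega
  · omega

def finalHighBrushes (k j : ℕ) : ℕ :=
  j + numCleanedHigh k (cleaningRound k j - 1) + numCleanedHigh k (cleaningRound k j) - (3 * k + 3)

lemma finalHighBrushes_eq {t j : ℕ} (ht : t < Nat.size k)
    (hlo : 3 * k + 3 - numCleanedHigh k (t + 1) ≤ j) (hhi : j < 3 * k + 3 - numCleanedHigh k t) :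
    finalHighBrushes k j = j + numCleanedHigh k t + numCleanedHigh k (t + 1) - (3 * k + 3) := by
  simp only [finalHighBrushes, cleaningRound_eq ht hlo hhi, Nat.add_sub_cancel]

lemma map_finalHighBrushes_round {t : ℕ} (ht : t < Nat.size k) :
    (Multiset.Ico (3 * k + 3 - numCleanedHigh k (t + 1)) (3 * k + 3 - numCleanedHigh k t)).map
        (finalHighBrushes k) =
      Multiset.Ico (numCleanedHigh k t) (numCleanedHigh k (t + 1)) := by
  have hsucc := numCleanedHigh_succ ht
  have hlt := numCleanedHigh_lt ht
  -- on this batch `finalHighBrushes k` is the translation by `-s`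
  set s := 3 * k + 3 - numCleanedHigh k t - numCleanedHigh k (t + 1)
  have hshift : Multiset.Ico (3 * k + 3 - numCleanedHigh k (t + 1))
      (3 * k + 3 - numCleanedHigh k t) =
      (Multiset.Ico (numCleanedHigh k t) (numCleanedHigh k (t + 1))).map (· + s) := by
    rw [Multiset.map_add_right_Ico]; congr 1 <;> omega
  rw [hshift, Multiset.map_map]
  refine (Multiset.map_congr rfl fun x hx => ?_).trans (Multiset.map_id _)
  rw [Multiset.mem_Ico] at hx
  simp only [Function.comp_apply, id]
  rw [finalHighBrushes_eq ht (by omega) (by omega)]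
  omega

lemma map_finalHighBrushes_Ico {t : ℕ} (ht : t ≤ Nat.size k) :
    (Multiset.Ico (3 * k + 3 - numCleanedHigh k t) (3 * k + 3)).map (finalHighBrushes k) =
      Multiset.Ico 0 (numCleanedHigh k t) := by
  induction t with
  | zero => simp [numCleanedHigh_zero]
  | succ t ih =>
    have ht' : t < Nat.size k := ht
    have hsucc := numCleanedHigh_succ ht'
    have hlt := numCleanedHigh_lt ht'
    rw [← Multiset.Ico_add_Ico_eq_Ico (b := 3 * k + 3 - numCleanedHigh k t) (by omega) (by omega),
      Multiset.map_add, ih ht'.le, map_finalHighBrushes_round ht', add_comm,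
      Multiset.Ico_add_Ico_eq_Ico (Nat.zero_le _) (by omega)]

lemma map_finalHighBrushes_high :
    (Multiset.Ico (2 * k + 3) (3 * k + 3)).map (finalHighBrushes k) = Multiset.Ico 0 k := by
  have h := map_finalHighBrushes_Ico (k := k) le_rfl
  rwa [numCleanedHigh_size, show 3 * k + 3 - k = 2 * k + 3 by omega] at h

lemma finalHighBrushes_lt {j : ℕ} (hlo : 2 * k + 3 ≤ j) (hhi : j < 3 * k + 3) :
    finalHighBrushes k j < k := by
  have h : finalHighBrushes k j ∈ Multiset.Ico 0 k := map_finalHighBrushes_high (k := k) ▸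
    Multiset.mem_map_of_mem _ (Multiset.mem_Ico.2 ⟨hlo, hhi⟩)
  exact (Multiset.mem_Ico.1 h).2

def doublingBrushes (k t j : ℕ) : ℕ :=
  if j < 3 * k + 3 - numCleanedHigh k t then initialBrushes k j + numCleanedHigh k t
  else finalHighBrushes k j

def finalBrushes (k j : ℕ) : ℕ :=
  if j < k then j + (2 * k + 3) else if j < 2 * k + 3 then k + 2 else finalHighBrushes k j

lemma cleanStep_doubling {t : ℕ} (ht : t < Nat.size k) :
    cleanStep (3 * k + 3) (prefixState _ (doublingBrushes k t) (3 * k + 3 - numCleanedHigh k t)) =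
      prefixState _ (doublingBrushes k (t + 1)) (3 * k + 3 - numCleanedHigh k (t + 1)) := by
  have hsucc := numCleanedHigh_succ ht
  have hlt := numCleanedHigh_lt ht
  refine cleanStep_prefixState (by omega) (by omega) (fun v hv => ?_) (fun v hv => ?_)
    (fun v hlo hhi => ?_) (fun v hlo hhi => ?_)
  · simp only [doublingBrushes, initialBrushes, if_pos hv]
    split_ifs <;> omega
  · simp only [doublingBrushes, initialBrushes, if_pos hv,
      if_pos (show v < 3 * k + 3 - numCleanedHigh k t by omega)]
    split_ifs <;> omega
  · simp only [doublingBrushes, initialBrushes, if_pos hhi,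
      if_neg (show ¬ v < 3 * k + 3 - numCleanedHigh k (t + 1) by omega),
      finalHighBrushes_eq ht hlo hhi]
    split_ifs <;> omega
  · simp only [doublingBrushes, if_neg (show ¬ v < 3 * k + 3 - numCleanedHigh k t by omega),
      if_neg (show ¬ v < 3 * k + 3 - numCleanedHigh k (t + 1) by omega)]

lemma cleanStep_middle :
    cleanStep (3 * k + 3) (prefixState _ (doublingBrushes k (Nat.size k))
        (3 * k + 3 - numCleanedHigh k (Nat.size k))) =
      prefixState _ (finalBrushes k) k := by
  rw [numCleanedHigh_size]
  refine cleanStep_prefixState (by omega) (by omega) (fun v hv => ?_) (fun v hv => ?_)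
    (fun v hlo hhi => ?_) (fun v hlo hhi => ?_)
  all_goals simp only [doublingBrushes, finalBrushes, initialBrushes, numCleanedHigh_size]
  all_goals split_ifs <;> omega

lemma cleanStep_low :
    cleanStep (3 * k + 3) (prefixState _ (finalBrushes k) k) =
      prefixState _ (finalBrushes k) 0 := by
  refine cleanStep_prefixState (by omega) (by omega) (fun v hv => ?_) (fun v hv => ?_)
    (fun v hlo hhi => ?_) (fun v hlo hhi => ?_)
  all_goals simp only [finalBrushes]
  all_goals split_ifs <;> omega

def trajectory (k t : ℕ) : (Fin (3 * k + 3) → ℕ) × Finset (Fin (3 * k + 3)) :=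
  if t ≤ Nat.size k then prefixState _ (doublingBrushes k t) (3 * k + 3 - numCleanedHigh k t)
  else prefixState _ (finalBrushes k) (if t = Nat.size k + 1 then k else 0)

lemma cleanStep_trajectory (t : ℕ) : cleanStep _ (trajectory k t) = trajectory k (t + 1) := by
  rcases lt_trichotomy t (Nat.size k) with ht | rfl | ht
  · rw [trajectory, trajectory, if_pos ht.le, if_pos (Nat.succ_le_of_lt ht), cleanStep_doubling ht]
  · rw [trajectory, trajectory, if_pos le_rfl, if_neg (Nat.not_succ_le_self _), if_pos rfl,
      cleanStep_middle]
  · rw [trajectory, trajectory, if_neg ht.not_ge, if_neg (show ¬ t + 1 ≤ Nat.size k by omega),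
      if_neg (show t + 1 ≠ Nat.size k + 1 by omega)]
    split_ifs
    · exact cleanStep_low
    · exact cleanStep_prefixState_zero _ _

lemma cleanState_eq_trajectory {ω0 : Fin (3 * k + 3) → ℕ}
    (hω0 : ∀ i : Fin (3 * k + 3), ω0 i = initialBrushes k i) (t : ℕ) :
    cleanState (3 * k + 3) ω0 t = trajectory k t := by
  induction t with
  | zero =>
    rw [trajectory, if_pos (Nat.zero_le _), numCleanedHigh_zero, Nat.sub_zero]
    refine Prod.ext (funext fun v => ?_) (Finset.ext fun v => ?_)
    · simp [cleanState, prefixState, doublingBrushes, numCleanedHigh_zero, hω0]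
    · simp [cleanState, prefixState]
  | succ t ih => rw [cleanState, ih, cleanStep_trajectory]

lemma trajectory_le (t : ℕ) (v : Fin (3 * k + 3)) : (trajectory k t).1 v ≤ 3 * k + 2 := by
  have hv := v.isLt
  have hc := numCleanedHigh_le (k := k) t
  have hhigh := finalHighBrushes_lt (k := k) (j := v)
  unfold trajectory
  split_ifs <;> simp only [prefixState, doublingBrushes, finalBrushes, initialBrushes] <;>
    split_ifs <;> omega

lemma map_finalBrushes :
    (Multiset.Ico 0 (3 * k + 3)).map (finalBrushes k) = Multiset.Ico 0 k +
      Multiset.replicate (k + 3) (k + 2) + Multiset.Ico (2 * k + 3) (3 * k + 3) := by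
  have hlow : (Multiset.Ico 0 k).map (finalBrushes k) = Multiset.Ico (2 * k + 3) (3 * k + 3) := by
    rw [Multiset.map_congr rfl (g := (· + (2 * k + 3))) fun j hj => by
      simp [finalBrushes, (Multiset.mem_Ico.1 hj).2], Multiset.map_add_right_Ico]
    congr 1 <;> omega
  have hmid : (Multiset.Ico k (2 * k + 3)).map (finalBrushes k) =
      Multiset.replicate (k + 3) (k + 2) := by
    have hcard : Multiset.card (Multiset.Ico k (2 * k + 3)) = k + 3 :=
      (Nat.card_Ico k (2 * k + 3)).trans (by omega)
    rw [Multiset.map_congr rfl (g := fun _ => k + 2) fun j hj => by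
      have := Multiset.mem_Ico.1 hj; simp only [finalBrushes]; split_ifs <;> omega,
      Multiset.map_const', hcard]
  have hhigh : (Multiset.Ico (2 * k + 3) (3 * k + 3)).map (finalBrushes k) = Multiset.Ico 0 k := by
    rw [← map_finalHighBrushes_high]
    refine Multiset.map_congr rfl fun j hj => ?_
    have := Multiset.mem_Ico.1 hj
    simp only [finalBrushes]; split_ifs <;> omega
  rw [← Multiset.Ico_add_Ico_eq_Ico (b := 2 * k + 3) (by omega) (by omega),
    ← Multiset.Ico_add_Ico_eq_Ico (b := k) (by omega) (by omega),
    Multiset.map_add, Multiset.map_add, hlow, hmid, hhigh]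
  abel

end CliqueCleaning

open CliqueCleaning in
theorem stmt_12 (k : ℕ)
    (ω0 : Fin (3 * k + 3) → ℕ)
    (hω0 : ∀ i : Fin (3 * k + 3),
      ω0 i = if k ≤ (i : ℕ) ∧ (i : ℕ) ≤ 2 * k + 2 then k + 2 else (i : ℕ)) :
    (∃ T : ℕ, (cleanState (3 * k + 3) ω0 T).2 = ∅ ∧
      Multiset.map (cleanState (3 * k + 3) ω0 T).1 Finset.univ.val
        = (Finset.range k).val + Multiset.replicate (k + 3) (k + 2)
            + (Finset.Icc (2 * k + 3) (3 * k + 2)).val) ∧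
    ∀ t : ℕ, ∀ v : Fin (3 * k + 3), (cleanState (3 * k + 3) ω0 t).1 v ≤ 3 * k + 2 := by
  have htraj := cleanState_eq_trajectory hω0
  have hfinal : trajectory k (Nat.size k + 2) = prefixState _ (finalBrushes k) 0 := by
    rw [trajectory, if_neg (by omega), if_neg (by omega)]
  refine ⟨⟨Nat.size k + 2, ?_, ?_⟩, fun t v => htraj t ▸ trajectory_le t v⟩
  · rw [htraj, hfinal]
    simp [prefixState]
  · have hIco (a b : ℕ) : (Finset.Ico a b).val = Multiset.Ico a b := rfl
    rw [htraj, hfinal, prefixState, map_univ_val_fin, ← Finset.range_val, Finset.range_eq_Ico,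
      Finset.range_eq_Ico, ← Finset.Ico_add_one_right_eq_Icc, hIco, hIco, hIco, map_finalBrushes]
    rfl
end

section
/- Let k > 8 and let \(\ell = \lceil \log_2(k+1) \rceil\). In the clique cleaning model on K_{3k+3} with \(\omega_0(v_i) = k+2\) for \(k \le i \le 2k+2\) and \(\omega_0(v_i) = i\) otherwise, no vertex v_i with \(i \le 2k+2\) is cleaned at any step \(t \le \ell\); specifically, before k vertices have been cleaned, such a vertex has at most \(2n' + 1\) brushes where the number of dirty neighbors is at least \(2n'+3\) for the appropriate count n'. -/
/-!
A dirty vertex has received one brush from every vertex cleaned so far, so when `x` of the `n`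
vertices are clean it is primed exactly when `ω₀ v + 2x + 1 ≥ n`. In the configuration of the
theorem, as long as `x < k` this fails for every `vᵢ` with `i ≤ 2k + 2` (there `ω₀ vᵢ ≤ k + 2`)
and holds for at most `2x + 1` of the others. Hence the number `x_t` of vertices cleaned after
`t` steps satisfies `x_{t+1} ≤ 2 x_t + 1`, i.e. `x_t < 2^t`, which stays below `k` while
`t < ⌈log₂ (k + 1)⌉`.
-/

open Finset

section CleaningProcess

variable {n : ℕ}

def primed (s : (Fin n → ℕ) × Finset (Fin n)) : Finset (Fin n) :=
  {v ∈ s.2 | s.2.card - 1 ≤ s.1 v}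

lemma cleanStep_snd (s : (Fin n → ℕ) × Finset (Fin n)) : (cleanStep n s).2 = s.2 \ primed s :=
  rfl

lemma cleanStep_fst_of_mem {s : (Fin n → ℕ) × Finset (Fin n)} {v : Fin n}
    (hv : v ∈ (cleanStep n s).2) : (cleanStep n s).1 v = s.1 v + #(primed s) := by
  rw [cleanStep_snd, mem_sdiff] at hv
  show (if v ∈ primed s then _ else if v ∈ s.2 then _ else _) = _
  rw [if_neg hv.2, if_pos hv.1]
  rfl

variable {ω0 : Fin n → ℕ} {t : ℕ} {v : Fin n}

lemma cleanState_succ_snd_subset : (cleanState n ω0 (t + 1)).2 ⊆ (cleanState n ω0 t).2 :=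
  sdiff_subset

lemma cleanState_fst_of_mem (hv : v ∈ (cleanState n ω0 t).2) :
    (cleanState n ω0 t).1 v = ω0 v + #(cleanState n ω0 t).2ᶜ := by
  induction t with
  | zero => simp [cleanState]
  | succ t ih =>
    have hP : primed (cleanState n ω0 t) ⊆ (cleanState n ω0 t).2 := filter_subset _ _
    rw [cleanState, cleanStep_fst_of_mem hv, ih (cleanState_succ_snd_subset hv), cleanStep_snd,
      card_compl, card_compl, card_sdiff_of_subset hP, Fintype.card_fin]
    have := card_le_card hP
    have := card_le_univ (cleanState n ω0 t).2
    simp only [Fintype.card_fin] at this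
    omega

lemma mem_cleanState_succ_iff :
    v ∈ (cleanState n ω0 (t + 1)).2 ↔
      v ∈ (cleanState n ω0 t).2 ∧ ω0 v + 2 * #(cleanState n ω0 t).2ᶜ + 1 < n := by
  rw [cleanState, cleanStep_snd, mem_sdiff, primed, mem_filter]
  refine and_congr_right fun hv => ?_
  rw [cleanState_fst_of_mem hv, card_compl, Fintype.card_fin, and_iff_right hv]
  have := card_pos.2 ⟨v, hv⟩
  have := card_le_univ (cleanState n ω0 t).2
  simp only [Fintype.card_fin] at this
  omega

lemma le_of_notMem_cleanState_succ (hv : v ∉ (cleanState n ω0 (t + 1)).2) :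
    n ≤ ω0 v + 2 * #(cleanState n ω0 t).2ᶜ + 1 := by
  induction t with
  | zero => exact not_lt.1 fun h => hv (mem_cleanState_succ_iff.2 ⟨mem_univ v, h⟩)
  | succ t ih =>
    by_cases hvt : v ∈ (cleanState n ω0 (t + 1)).2
    · exact not_lt.1 fun h => hv (mem_cleanState_succ_iff.2 ⟨hvt, h⟩)
    · have := card_le_card (compl_subset_compl.2 (cleanState_succ_snd_subset (ω0 := ω0) (t := t)))
      have := ih hvt
      omega

lemma card_compl_cleanState_succ_le :
    #(cleanState n ω0 (t + 1)).2ᶜ ≤ #{v | n ≤ ω0 v + 2 * #(cleanState n ω0 t).2ᶜ + 1} :=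
  card_le_card fun v hv =>
    mem_filter.2 ⟨mem_univ v, le_of_notMem_cleanState_succ (mem_compl.1 hv)⟩

end CleaningProcess

lemma card_filter_le_val_add_le (n c : ℕ) : #{i : Fin n | n ≤ (i : ℕ) + c} ≤ c := by
  calc #{i : Fin n | n ≤ (i : ℕ) + c}
      ≤ #(Ico (n - c) n) := card_le_card_of_injOn Fin.val
        (fun i hi => by simp at hi; simp; omega)
        Fin.val_injective.injOn
    _ ≤ c := by rw [Nat.card_Ico]; omega

section Configuration

variable {k : ℕ} {ω0 : Fin (3 * k + 3) → ℕ}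
  (hω0 : ∀ i : Fin (3 * k + 3),
    ω0 i = if k ≤ (i : ℕ) ∧ (i : ℕ) ≤ 2 * k + 2 then k + 2 else (i : ℕ))
include hω0

lemma initial_le_of_val_le (i : Fin (3 * k + 3)) (hi : (i : ℕ) ≤ 2 * k + 2) : ω0 i ≤ k + 2 := by
  rw [hω0 i]; split_ifs <;> omega

lemma card_primable_le {m : ℕ} (hm : m < k) :
    #{i | 3 * k + 3 ≤ ω0 i + 2 * m + 1} ≤ 2 * m + 1 :=
  calc #{i | 3 * k + 3 ≤ ω0 i + 2 * m + 1}
      ≤ #{i : Fin (3 * k + 3) | 3 * k + 3 ≤ (i : ℕ) + (2 * m + 1)} :=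
        card_le_card <| monotone_filter_right _ fun i _ hi => by
          rw [hω0 i] at hi; split_ifs at hi <;> omega
    _ ≤ 2 * m + 1 := card_filter_le_val_add_le _ _

lemma card_compl_cleanState_lt_two_pow {t : ℕ} (ht : 2 ^ t ≤ k) :
    #(cleanState (3 * k + 3) ω0 t).2ᶜ < 2 ^ t := by
  induction t with
  | zero => simp [cleanState]
  | succ t ih =>
    have hkt : 2 ^ t ≤ k := le_trans (Nat.pow_le_pow_right two_pos t.le_succ) ht
    have hx := ih hkt
    have := card_compl_cleanState_succ_le.trans (card_primable_le hω0 (hx.trans_le hkt))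
    rw [pow_succ]
    omega

end Configuration

theorem stmt_13_general (k : ℕ) (ℓ : ℕ) (hℓ : ℓ = Nat.clog 2 (k + 1))
    (ω0 : Fin (3 * k + 3) → ℕ)
    (hω0 : ∀ i : Fin (3 * k + 3),
      ω0 i = if k ≤ (i : ℕ) ∧ (i : ℕ) ≤ 2 * k + 2 then k + 2 else (i : ℕ)) :
    ∀ t : ℕ, t ≤ ℓ → ∀ i : Fin (3 * k + 3), (i : ℕ) ≤ 2 * k + 2 →
      i ∈ (cleanState (3 * k + 3) ω0 t).2 := by
  intro t ht i hi
  induction t with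
  | zero => exact mem_univ i
  | succ t ih =>
    have h2t : 2 ^ t ≤ k := Nat.lt_succ_iff.1 (Nat.pow_lt_of_lt_clog (hℓ ▸ ht))
    have hx := card_compl_cleanState_lt_two_pow hω0 h2t
    have hωi := initial_le_of_val_le hω0 i hi
    exact mem_cleanState_succ_iff.2 ⟨ih (by omega), by omega⟩

theorem stmt_13 (k : ℕ) (hk : 8 < k) (ℓ : ℕ) (hℓ : ℓ = Nat.clog 2 (k + 1))
    (ω0 : Fin (3 * k + 3) → ℕ)
    (hω0 : ∀ i : Fin (3 * k + 3),
      ω0 i = if k ≤ (i : ℕ) ∧ (i : ℕ) ≤ 2 * k + 2 then k + 2 else (i : ℕ)) :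
    ∀ t : ℕ, t ≤ ℓ → ∀ i : Fin (3 * k + 3), (i : ℕ) ≤ 2 * k + 2 →
      i ∈ (cleanState (3 * k + 3) ω0 t).2 :=
  stmt_13_general k ℓ hℓ ω0 hω0
end
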